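/- arXiv:2401.05917 — 11 statements merged into one kernel-verified Lean document; each statement's English description precedes it below -/
import Mathlib

section
/- Let X and Y be topological spaces and let Ψ : O(X) → O(Y) satisfy (I₀): Ψ(X) = Y and Ψ(∅) = ∅; (II₀): Ψ(U ∩ V) = Ψ(U) ∩ Ψ(V) for all open U, V ⊆ X; and (III): Ψ(⋃_α U_α) = ⋃_α Ψ(U_α) for every family of open sets. Let Φ(V) := ⋃{U ∈ O(X) : Ψ(U) ⊆ V} be the pseudo-left-inverse of Ψ. Then for every nonempty closed irreducible subset F ⊆ Y, the set X \ Φ(Y \ F) is a nonempty closed irreducible subset of X. -/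
open TopologicalSpace

/-!
Since `Ψ` preserves arbitrary joins, its pseudo-left-inverse `Φ` is its right adjoint, and the
right adjoint of a map preserving `⊤` and binary meets sends prime elements to prime elements.
In a lattice of open sets the prime elements are exactly the complements of closed
irreducible sets.
-/

theorem galoisConnection_sSup_of_map_sSup {α β : Type*} [CompleteLattice α] [CompleteLattice β]
    {l : α → β} (hl : ∀ s : Set α, l (sSup s) = sSup (l '' s)) :
    GaloisConnection l fun b => sSup {a | l a ≤ b} := by
  have hmono : Monotone l := fun a a' h => by
    have hsup : l (a ⊔ a') = l a ⊔ l a' := by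
      rw [← sSup_pair, hl, Set.image_pair, sSup_pair]
    rw [← sup_eq_right.2 h, hsup]
    exact le_sup_left
  intro a b
  refine ⟨fun h => le_sSup h, fun h => (hmono h).trans ?_⟩
  rw [hl]
  exact sSup_le (Set.forall_mem_image.2 fun _ hx => hx)

theorem GaloisConnection.infPrime_u {α β : Type*} [SemilatticeInf α] [OrderTop α]
    [SemilatticeInf β] [OrderTop β] {l : α → β} {u : β → α} (gc : GaloisConnection l u)
    (hl_top : l ⊤ = ⊤) (hl_inf : ∀ a a', l (a ⊓ a') = l a ⊓ l a') {b : β} (hb : InfPrime b) :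
    InfPrime (u b) := by
  refine ⟨fun hmax => hb.ne_top ?_, fun {a a'} h => ?_⟩
  · rw [← top_le_iff, ← hl_top, gc]
    exact hmax.eq_top.ge
  · rw [← gc, hl_inf, hb.inf_le] at h
    exact h.imp gc.le_u gc.le_u

theorem TopologicalSpace.Opens.infPrime_iff_isIrreducible_compl {X : Type*} [TopologicalSpace X]
    (W : Opens X) : InfPrime W ↔ IsIrreducible (W : Set X)ᶜ := by
  have hmeets : ∀ U : Opens X, ((W : Set X)ᶜ ∩ U).Nonempty ↔ ¬U ≤ W := fun U => by
    rw [Set.inter_comm, Set.inter_compl_nonempty_iff]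
    rfl
  refine and_congr ?_ ⟨fun h u v hu hv hWu hWv => ?_, fun h U V hUV => ?_⟩
  · rw [isMax_iff_eq_top, Set.nonempty_compl, ← SetLike.coe_set_eq, Opens.coe_top]
  · exact (hmeets (⟨u, hu⟩ ⊓ ⟨v, hv⟩)).2 fun hle =>
      (h hle).elim ((hmeets ⟨u, hu⟩).1 hWu) ((hmeets ⟨v, hv⟩).1 hWv)
  · by_contra! hU
    exact (hmeets (U ⊓ V)).1 (h U V U.isOpen V.isOpen ((hmeets U).2 hU.1) ((hmeets V).2 hU.2)) hUV

/-- If `Ψ : O(X) → O(Y)` satisfies (I₀), (II₀) and (III) and `Φ` is its pseudo-left-inverse,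
then for every nonempty closed irreducible `F ⊆ Y`, the set `X \ Φ(Y \ F)` is a nonempty
closed irreducible subset of `X`. -/
theorem stmt1 {X Y : Type*} [TopologicalSpace X] [TopologicalSpace Y]
    (Ψ : Opens X → Opens Y) (Φ : Opens Y → Opens X)
    (hI₀ : Ψ ⊤ = ⊤ ∧ Ψ ⊥ = ⊥)
    (hII₀ : ∀ U V : Opens X, Ψ (U ⊓ V) = Ψ U ⊓ Ψ V)
    (hIII : ∀ S : Set (Opens X), Ψ (sSup S) = sSup (Ψ '' S))
    (hΦ : ∀ V : Opens Y, Φ V = sSup {U : Opens X | Ψ U ≤ V})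
    (F : Set Y) (hFc : IsClosed F) (hFirr : IsIrreducible F) :
    IsClosed ((Φ ⟨Fᶜ, hFc.isOpen_compl⟩ : Set X)ᶜ) ∧
      IsIrreducible ((Φ ⟨Fᶜ, hFc.isOpen_compl⟩ : Set X)ᶜ) := by
  obtain rfl : Φ = fun V => sSup {U : Opens X | Ψ U ≤ V} := funext hΦ
  have hprime : InfPrime (⟨Fᶜ, hFc.isOpen_compl⟩ : Opens Y) := by
    rwa [Opens.infPrime_iff_isIrreducible_compl, Opens.coe_mk, compl_compl]
  refine ⟨(Opens.isOpen _).isClosed_compl, ?_⟩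
  rw [← Opens.infPrime_iff_isIrreducible_compl]
  exact (galoisConnection_sSup_of_map_sSup hIII).infPrime_u hI₀.1 hII₀ hprime
end

section
/- Let X be a point-complete (sober) T₀-space, let Y be a topological space, and let Ψ : O(X) → O(Y) satisfy (I₀): Ψ(X) = Y and Ψ(∅) = ∅; (II₀): Ψ(U ∩ V) = Ψ(U) ∩ Ψ(V) for all open U, V ⊆ X; and (III): Ψ(⋃_α U_α) = ⋃_α Ψ(U_α) for every family of open sets. Then there exists exactly one map π : Y → X such that π⁻¹(U) = Ψ(U) for every open U ⊆ X, and this map π is continuous. -/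
open TopologicalSpace

/-- If `X` is a point-complete (sober) T₀-space and `Ψ : O(X) → O(Y)` satisfies (I₀), (II₀)
and (III), then there is exactly one map `π : Y → X` with `π⁻¹(U) = Ψ(U)` for all open `U`,
and this map is continuous. -/
theorem stmt2 {X Y : Type*} [TopologicalSpace X] [TopologicalSpace Y]
    [T0Space X] [QuasiSober X]
    (Ψ : Opens X → Opens Y)
    (hI₀ : Ψ ⊤ = ⊤ ∧ Ψ ⊥ = ⊥)
    (hII₀ : ∀ U V : Opens X, Ψ (U ⊓ V) = Ψ U ⊓ Ψ V)
    (hIII : ∀ S : Set (Opens X), Ψ (sSup S) = sSup (Ψ '' S)) :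
    ∃ π : Y → X, Continuous π ∧ (∀ U : Opens X, π ⁻¹' (U : Set X) = (Ψ U : Set Y)) ∧
      ∀ π' : Y → X, (∀ U : Opens X, π' ⁻¹' (U : Set X) = (Ψ U : Set Y)) → π' = π := by
  have mono : ∀ U W : Opens X, U ≤ W → Ψ U ≤ Ψ W := by
    intro U W h
    have : U ⊓ W = U := inf_eq_left.mpr h
    rw [← this, hII₀]
    exact inf_le_right
  -- For each y, define the closed set C y and show it has a generic point.
  have key : ∀ y : Y, ∃ x : X, ∀ U : Opens X, x ∈ U ↔ y ∈ (Ψ U : Set Y) := by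
    intro y
    set V : Opens X := sSup {U : Opens X | y ∉ (Ψ U : Set Y)} with hV
    set C : Set X := (V : Set X)ᶜ with hC
    have hyV : y ∉ (Ψ V : Set Y) := by
      rw [hV, hIII]
      intro hy
      simp only [SetLike.mem_coe, Opens.mem_sSup] at hy
      obtain ⟨W, ⟨U, hU, rfl⟩, hyW⟩ := hy
      exact hU hyW
    have claim : ∀ U : Opens X, ((U : Set X) ∩ C).Nonempty ↔ y ∈ (Ψ U : Set Y) := by
      intro U
      constructor
      · rintro ⟨x, hxU, hxC⟩
        by_contra hy
        exact hxC (SetLike.le_def.mp (le_sSup (show U ∈ _ from hy)) hxU)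
      · intro hy
        by_contra hne
        rw [Set.not_nonempty_iff_eq_empty] at hne
        have hsub : (U : Set X) ⊆ (V : Set X) := by
          intro x hx
          by_contra hxV
          exact Set.eq_empty_iff_forall_notMem.mp hne x ⟨hx, hxV⟩
        exact hyV (mono U V (fun x hx => hsub hx) hy)
    have hCclosed : IsClosed C := V.isOpen.isClosed_compl
    have hCne : C.Nonempty := by
      have := (claim ⊤).mpr (by rw [hI₀.1]; trivial)
      simpa using this
    have hCpre : IsPreirreducible C := by
      intro u v hu hv ⟨a, haC, hau⟩ ⟨b, hbC, hbv⟩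
      have h1 : y ∈ (Ψ ⟨u, hu⟩ : Set Y) := (claim ⟨u, hu⟩).mp ⟨a, hau, haC⟩
      have h2 : y ∈ (Ψ ⟨v, hv⟩ : Set Y) := (claim ⟨v, hv⟩).mp ⟨b, hbv, hbC⟩
      have h3 : y ∈ (Ψ (⟨u, hu⟩ ⊓ ⟨v, hv⟩) : Set Y) := by
        rw [hII₀]; exact ⟨h1, h2⟩
      obtain ⟨x, hx1, hx2⟩ := (claim (⟨u, hu⟩ ⊓ ⟨v, hv⟩)).mpr h3
      exact ⟨x, hx2, hx1⟩
    obtain ⟨x, hx⟩ := QuasiSober.sober ⟨hCne, hCpre⟩ hCclosed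
    refine ⟨x, fun U => ?_⟩
    rw [← claim U]
    constructor
    · intro hxU
      exact ⟨x, hxU, hx ▸ subset_closure rfl⟩
    · rintro ⟨z, hzU, hzC⟩
      have hz : z ∈ closure ({x} : Set X) := hx ▸ hzC
      obtain ⟨w, hwU, hw⟩ := mem_closure_iff.mp hz U U.isOpen hzU
      rwa [← hw]
  choose π hπ using key
  have hpre : ∀ U : Opens X, π ⁻¹' (U : Set X) = (Ψ U : Set Y) := by
    intro U
    ext y
    exact hπ y U
  refine ⟨π, ?_, hpre, ?_⟩
  · rw [continuous_def]
    intro s hs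
    rw [show s = ((⟨s, hs⟩ : Opens X) : Set X) from rfl, hpre ⟨s, hs⟩]
    exact (Ψ ⟨s, hs⟩).isOpen
  · intro π' hπ'
    funext y
    have : Inseparable (π' y) (π y) := by
      rw [inseparable_iff_forall_isOpen]
      intro s hs
      have h1 : π' y ∈ s ↔ y ∈ (Ψ ⟨s, hs⟩ : Set Y) := by
        rw [← hπ' ⟨s, hs⟩]; rfl
      have h2 : π y ∈ s ↔ y ∈ (Ψ ⟨s, hs⟩ : Set Y) := hπ y ⟨s, hs⟩
      rw [h1, h2]
    exact this.eq
end

section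
/- Let X and P be point-complete (sober) T₀-spaces and let π : P → X be a continuous map. Then π is pseudo-open and pseudo-epimorphic if and only if the map Ψ : O(X) → O(P), Ψ(U) := π⁻¹(U), satisfies: (II) π⁻¹((⋂_α U_α)°) = (⋂_α π⁻¹(U_α))° for every family of open subsets U_α of X, and (IV) Ψ is injective (i.e., π⁻¹(U₁) = π⁻¹(U₂) implies U₁ = U₂ for open U₁, U₂ ⊆ X). -/
open TopologicalSpace

/-- The pseudo-graph of a continuous map `π : P → X`. -/
def pseudoGraph {P X : Type*} [TopologicalSpace X] (π : P → X) : Set (P × P) :=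
  {pq | π pq.2 ∈ closure {π pq.1}}

/-- A subset `Z ⊆ P` is `R_π`-invariant if `q ∈ Z` and `(p, q) ∈ R_π` imply `p ∈ Z`. -/
def IsPseudoGraphInvariant {P X : Type*} [TopologicalSpace X] (π : P → X) (Z : Set P) : Prop :=
  ∀ p q : P, (p, q) ∈ pseudoGraph π → q ∈ Z → p ∈ Z

/-- `π` is pseudo-open: the first-coordinate projection from the pseudo-graph is open, and the
image of every `R_π`-invariant open subset of `P` is open in the subspace `π(P)`. -/
def IsPseudoOpen {P X : Type*} [TopologicalSpace P] [TopologicalSpace X] (π : P → X) : Prop :=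
  IsOpenMap (fun z : pseudoGraph π => z.1.1) ∧
    ∀ V : Set P, IsOpen V → IsPseudoGraphInvariant π V →
      IsOpen (Subtype.val ⁻¹' (π '' V) : Set (Set.range π))

/-- `π` is pseudo-epimorphic: `π(P) ∩ F` is dense in `F` for every closed `F ⊆ X`. -/
def IsPseudoEpi {P X : Type*} [TopologicalSpace X] (π : P → X) : Prop :=
  ∀ F : Set X, IsClosed F → F ⊆ closure (Set.range π ∩ F)

/-- If `y ∈ cl {x}`, every open set containing `y` contains `x`. -/
lemma mem_of_closure_singleton' {X : Type*} [TopologicalSpace X] {x y : X} {U : Set X}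
    (hU : IsOpen U) (hy : y ∈ closure ({x} : Set X)) (hyU : y ∈ U) : x ∈ U := by
  rcases mem_closure_iff.mp hy U hU hyU with ⟨z, hzU, hzx⟩
  have : z = x := hzx
  exact this ▸ hzU

/-- (IV) implies pseudo-epimorphic. -/
lemma epi_of_inj' {P X : Type*} [TopologicalSpace P] [TopologicalSpace X] {π : P → X}
    (h : ∀ U₁ U₂ : Set X, IsOpen U₁ → IsOpen U₂ → π ⁻¹' U₁ = π ⁻¹' U₂ → U₁ = U₂) :
    IsPseudoEpi π := by
  intro F hF
  have hsub : closure (Set.range π ∩ F) ⊆ F :=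
    hF.closure_subset_iff.mpr Set.inter_subset_right
  have hpre : π ⁻¹' (closure (Set.range π ∩ F))ᶜ = π ⁻¹' Fᶜ := by
    ext p
    simp only [Set.mem_preimage, Set.mem_compl_iff]
    constructor
    · intro hc hFp; exact hc (subset_closure ⟨⟨p, rfl⟩, hFp⟩)
    · intro hc hclp; exact hc (hsub hclp)
  have heq := h _ _ isClosed_closure.isOpen_compl hF.isOpen_compl hpre
  have : closure (Set.range π ∩ F) = F := compl_injective heq
  exact this.ge

/-- Pseudo-epimorphic: an open set whose trace on `range π` is inside an open set
is entirely inside it. -/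
lemma sub_of_epi' {P X : Type*} [TopologicalSpace P] [TopologicalSpace X] {π : P → X}
    (h : IsPseudoEpi π) {V₁ V₂ : Set X} (hV₁ : IsOpen V₁) (hV₂ : IsOpen V₂)
    (hsub : Set.range π ∩ V₁ ⊆ V₂) : V₁ ⊆ V₂ := by
  intro x hx
  by_contra hx2
  have hxcl : x ∈ closure (Set.range π ∩ V₂ᶜ) := h V₂ᶜ hV₂.isClosed_compl hx2
  rcases mem_closure_iff.mp hxcl V₁ hV₁ hx with ⟨y, hyV₁, hyr, hyc⟩
  exact hyc (hsub ⟨hyr, hyV₁⟩)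

/-- Pseudo-epimorphic implies (IV). -/
lemma inj_of_epi' {P X : Type*} [TopologicalSpace P] [TopologicalSpace X] {π : P → X}
    (h : IsPseudoEpi π) {U₁ U₂ : Set X} (h₁ : IsOpen U₁) (h₂ : IsOpen U₂)
    (he : π ⁻¹' U₁ = π ⁻¹' U₂) : U₁ = U₂ := by
  have key : ∀ V₁ V₂ : Set X, IsOpen V₁ → IsOpen V₂ → π ⁻¹' V₁ ⊆ π ⁻¹' V₂ → V₁ ⊆ V₂ := by
    intro V₁ V₂ hV₁ hV₂ hpre
    refine sub_of_epi' h hV₁ hV₂ ?_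
    rintro x ⟨⟨p, rfl⟩, hx⟩
    exact hpre hx
  exact subset_antisymm (key U₁ U₂ h₁ h₂ he.le) (key U₂ U₁ h₂ h₁ he.ge)

/-- Given (II), the "up-closure of the image" of an open set is open. -/
lemma TSet_open' {P X : Type*} [TopologicalSpace P] [TopologicalSpace X] {π : P → X}
    (hII : ∀ S : Set (Set X), (∀ U ∈ S, IsOpen U) →
      π ⁻¹' interior (⋂₀ S) = interior (⋂ U ∈ S, π ⁻¹' U))
    {B : Set P} (hB : IsOpen B) :
    IsOpen {x : X | ∃ q ∈ B, π q ∈ closure ({x} : Set X)} := by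
  set T := {x : X | ∃ q ∈ B, π q ∈ closure ({x} : Set X)} with hT
  set S : Set (Set X) := {U | IsOpen U ∧ B ⊆ π ⁻¹' U} with hS
  have h1 : ⋂₀ S = T := by
    ext x
    constructor
    · intro hx
      by_contra hc
      have hc' : ∀ q ∈ B, π q ∉ closure ({x} : Set X) := by
        intro q hq hqc
        exact hc ⟨q, hq, hqc⟩
      have hUS : (closure ({x} : Set X))ᶜ ∈ S :=
        ⟨isClosed_closure.isOpen_compl, fun q hq => hc' q hq⟩
      exact hx _ hUS (subset_closure rfl)
    · rintro ⟨q, hq, hqc⟩ U hU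
      exact mem_of_closure_singleton' hU.1 hqc (hU.2 hq)
  have h2 := hII S (fun U hU => hU.1)
  have hBsub : B ⊆ π ⁻¹' interior (⋂₀ S) := by
    rw [h2]
    refine interior_maximal ?_ hB
    intro q hq
    exact Set.mem_iInter₂.mpr fun U hU => hU.2 hq
  have hTsub : T ⊆ interior (⋂₀ S) := by
    rintro x ⟨q, hq, hqc⟩
    exact mem_of_closure_singleton' isOpen_interior hqc (hBsub hq)
  have hTeq : T = interior (⋂₀ S) :=
    subset_antisymm hTsub (interior_subset.trans h1.le)
  rw [hTeq]
  exact isOpen_interior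

/-- For point-complete T₀-spaces `X`, `P` and continuous `π : P → X`:
`π` is pseudo-open and pseudo-epimorphic iff `Ψ(U) := π⁻¹(U)` satisfies (II) and (IV). -/
theorem stmt3 {P X : Type*} [TopologicalSpace P] [TopologicalSpace X]
    [T0Space X] [QuasiSober X] [T0Space P] [QuasiSober P]
    (π : P → X) (hπ : Continuous π) :
    (IsPseudoOpen π ∧ IsPseudoEpi π) ↔
      ((∀ S : Set (Set X), (∀ U ∈ S, IsOpen U) →
          π ⁻¹' interior (⋂₀ S) = interior (⋂ U ∈ S, π ⁻¹' U)) ∧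
        (∀ U₁ U₂ : Set X, IsOpen U₁ → IsOpen U₂ → π ⁻¹' U₁ = π ⁻¹' U₂ → U₁ = U₂)) := by
  constructor
  · rintro ⟨⟨hopen1, hopen2⟩, hepi⟩
    refine ⟨?_, fun U₁ U₂ h₁ h₂ he => inj_of_epi' hepi h₁ h₂ he⟩
    intro S hS
    set Z : Set P := ⋂ U ∈ S, π ⁻¹' U with hZ
    have hZinv : IsPseudoGraphInvariant π Z := by
      intro p q hpq hq
      refine Set.mem_iInter₂.mpr fun U hU => ?_
      show π p ∈ U
      exact mem_of_closure_singleton' (hS U hU) hpq (Set.mem_iInter₂.mp hq U hU)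
    have hWinv : IsPseudoGraphInvariant π (interior Z) := by
      intro p q hpq hq
      have hO : IsOpen {z : pseudoGraph π | z.1.2 ∈ interior Z} :=
        IsOpen.preimage (continuous_snd.comp continuous_subtype_val) isOpen_interior
      have himg := hopen1 _ hO
      have hpmem : p ∈ (fun z : pseudoGraph π => z.1.1) '' {z | z.1.2 ∈ interior Z} :=
        ⟨⟨(p, q), hpq⟩, hq, rfl⟩
      have hsub : (fun z : pseudoGraph π => z.1.1) '' {z | z.1.2 ∈ interior Z} ⊆ Z := by
        rintro p' ⟨z, hz, rfl⟩
        exact hZinv z.1.1 z.1.2 z.2 (interior_subset hz)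
      exact mem_interior.mpr ⟨_, hsub, himg, hpmem⟩
    apply subset_antisymm
    · refine interior_maximal ?_ (IsOpen.preimage hπ isOpen_interior)
      intro p hp
      exact Set.mem_iInter₂.mpr fun U hU => Set.mem_sInter.mp (interior_subset hp) U hU
    · have hWo := hopen2 (interior Z) isOpen_interior hWinv
      rw [isOpen_induced_iff] at hWo
      obtain ⟨U₀, hU₀o, hU₀e⟩ := hWo
      have himg_eq : π '' interior Z = Set.range π ∩ U₀ := by
        ext x
        constructor
        · rintro ⟨w, hw, rfl⟩
          refine ⟨⟨w, rfl⟩, ?_⟩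
          have hm : (⟨π w, ⟨w, rfl⟩⟩ : Set.range π) ∈ Subtype.val ⁻¹' (π '' interior Z) :=
            ⟨w, hw, rfl⟩
          rw [← hU₀e] at hm
          exact hm
        · rintro ⟨⟨p, rfl⟩, hxU₀⟩
          have hm : (⟨π p, ⟨p, rfl⟩⟩ : Set.range π) ∈ Subtype.val ⁻¹' U₀ := hxU₀
          rw [hU₀e] at hm
          exact hm
      have hU₀S : ∀ U ∈ S, U₀ ⊆ U := by
        intro U hU
        refine sub_of_epi' hepi hU₀o (hS U hU) ?_
        intro x hx
        have hx' : x ∈ π '' interior Z := himg_eq ▸ hx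
        rcases hx' with ⟨w, hw, rfl⟩
        exact Set.mem_iInter₂.mp (interior_subset hw) U hU
      have hU₀int : U₀ ⊆ interior (⋂₀ S) :=
        interior_maximal (fun x hx => Set.mem_sInter.mpr fun U hU => hU₀S U hU hx) hU₀o
      intro w hw
      have hwU₀ : π w ∈ U₀ := (himg_eq ▸ Set.mem_image_of_mem π hw).2
      exact hU₀int hwU₀
  · rintro ⟨hII, hIV⟩
    have hepi : IsPseudoEpi π := epi_of_inj' hIV
    refine ⟨⟨?_, ?_⟩, hepi⟩
    · intro O hO
      rw [isOpen_induced_iff] at hO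
      obtain ⟨R, hR, hRO⟩ := hO
      rw [isOpen_iff_forall_mem_open]
      rintro p ⟨z, hzO, rfl⟩
      rw [← hRO] at hzO
      obtain ⟨A, B, hA, hB, hzA, hzB, hAB⟩ := isOpen_prod_iff.mp hR z.val.1 z.val.2 hzO
      refine ⟨A ∩ π ⁻¹' {x | ∃ q ∈ B, π q ∈ closure ({x} : Set X)}, ?_,
        hA.inter ((TSet_open' hII hB).preimage hπ), hzA, z.val.2, hzB, z.2⟩
      rintro p' ⟨hp'A, q', hq'B, hq'⟩
      refine ⟨⟨(p', q'), hq'⟩, ?_, rfl⟩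
      rw [← hRO]
      exact hAB (Set.mk_mem_prod hp'A hq'B)
    · intro V hV hinv
      have hT := TSet_open' hII hV
      have heq : (Subtype.val ⁻¹' (π '' V) : Set (Set.range π)) =
          Subtype.val ⁻¹' {x | ∃ q ∈ V, π q ∈ closure ({x} : Set X)} := by
        ext ⟨x, hx⟩
        simp only [Set.mem_preimage, Set.mem_setOf_eq]
        constructor
        · rintro ⟨v, hv, rfl⟩
          exact ⟨v, hv, subset_closure rfl⟩
        · rintro ⟨q, hq, hqc⟩
          obtain ⟨p, rfl⟩ := hx
          exact ⟨p, hinv p q hqc hq, rfl⟩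
      rw [heq]
      exact hT.preimage continuous_subtype_val
end

section
/- Let X and Y be point-complete (sober) T₀-spaces. If Ψ : O(X) → O(Y) is an order isomorphism (a bijection such that U₁ ⊆ U₂ if and only if Ψ(U₁) ⊆ Ψ(U₂)), then there exists a unique homeomorphism π from Y onto X such that Ψ(U) = π⁻¹(U) for every open U ⊆ X. -/
/-!
The points of a sober space are in bijection with the inf-prime elements of its lattice of
opens: `x` corresponds to the complement of `closure {x}`, and conversely the complement of an
inf-prime open is irreducible and closed, so it has a generic point. Order isomorphisms preserve
inf-primeness, so `Ψ` induces maps `Y → X` and `X → Y` whose preimages of opens are given by `Ψ`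
and `Ψ⁻¹`. In a T₀-space a map is determined by its preimages of opens, which makes these maps
mutually inverse and the homeomorphism unique.
-/

open TopologicalSpace

theorem InfPrime.map_orderIso {α β : Type*} [SemilatticeInf α] [SemilatticeInf β] {a : α}
    (ha : InfPrime a) (f : α ≃o β) : InfPrime (f a) := by
  refine ⟨f.isMax_apply.not.2 ha.1, fun b c h => ?_⟩
  have := ha.2 (show f.symm b ⊓ f.symm c ≤ a by rw [← map_inf]; exact f.symm_apply_le.2 h)
  simpa only [f.symm_apply_le] using this

theorem eq_of_forall_preimage_opens_eq {X Y : Type*} [TopologicalSpace X] [T0Space X]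
    {f g : Y → X} (h : ∀ U : Opens X, f ⁻¹' U = g ⁻¹' U) : f = g :=
  funext fun y => (inseparable_iff_forall_isOpen.2 fun s hs => Set.ext_iff.1 (h ⟨s, hs⟩) y).eq

section

variable {X Y : Type*} [TopologicalSpace X] [TopologicalSpace Y]

namespace TopologicalSpace.Opens

theorem compl_inter_nonempty_iff {W U : Opens X} : ((W : Set X)ᶜ ∩ U).Nonempty ↔ ¬U ≤ W := by
  rw [Set.inter_comm]
  exact Set.inter_compl_nonempty_iff

theorem isIrreducible_compl_of_infPrime {W : Opens X} (hW : InfPrime W) :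
    IsIrreducible (W : Set X)ᶜ := by
  refine ⟨?_, fun u v hu hv hWu hWv => ?_⟩
  · simpa [Set.nonempty_compl, isMax_iff_eq_top] using hW.1
  · have hu' : ¬(⟨u, hu⟩ : Opens X) ≤ W := compl_inter_nonempty_iff.1 hWu
    have hv' : ¬(⟨v, hv⟩ : Opens X) ≤ W := compl_inter_nonempty_iff.1 hWv
    exact compl_inter_nonempty_iff.2 fun h => (hW.inf_le.1 h).elim hu' hv'

theorem exists_forall_mem_iff_of_infPrime [QuasiSober X] {W : Opens X} (hW : InfPrime W) :
    ∃ x : X, ∀ U : Opens X, x ∈ U ↔ ¬U ≤ W := by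
  obtain ⟨x, hx⟩ := QuasiSober.sober (isIrreducible_compl_of_infPrime hW) W.isOpen.isClosed_compl
  exact ⟨x, fun U => (hx.mem_open_set_iff U.isOpen).trans compl_inter_nonempty_iff⟩

theorem le_closure_singleton_compl_iff {y : Y} {U : Opens Y} :
    U ≤ (Closeds.closure {y}).compl ↔ y ∉ U :=
  Set.subset_compl_iff_disjoint_right.trans <|
    disjoint_comm.trans (isGenericPoint_closure.disjoint_iff U.isOpen)

theorem infPrime_closure_singleton_compl (y : Y) : InfPrime (Closeds.closure {y}).compl := by
  refine ⟨fun h => ?_, fun U V h => ?_⟩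
  · exact le_closure_singleton_compl_iff.1 (h le_top) trivial
  · simp only [le_closure_singleton_compl_iff] at h ⊢
    rwa [mem_inf, not_and_or] at h

theorem exists_forall_mem_iff_mem_orderIso [QuasiSober X] (e : Opens X ≃o Opens Y) (y : Y) :
    ∃ x : X, ∀ U : Opens X, x ∈ U ↔ y ∈ e U := by
  obtain ⟨x, hx⟩ :=
    exists_forall_mem_iff_of_infPrime ((infPrime_closure_singleton_compl y).map_orderIso e.symm)
  exact ⟨x, fun U => by rw [hx, e.le_symm_apply, le_closure_singleton_compl_iff, not_not]⟩

end TopologicalSpace.Opens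

theorem exists_continuous_preimage_eq [QuasiSober X] (e : Opens X ≃o Opens Y) :
    ∃ f : Y → X, Continuous f ∧ ∀ U : Opens X, f ⁻¹' U = e U := by
  choose f hf using Opens.exists_forall_mem_iff_mem_orderIso e
  have hpre : ∀ U : Opens X, f ⁻¹' U = e U := fun U => Set.ext fun y => hf y U
  exact ⟨f, continuous_def.2 fun s hs => hpre ⟨s, hs⟩ ▸ (e ⟨s, hs⟩).isOpen, hpre⟩

theorem exists_homeomorph_preimage_eq [T0Space X] [QuasiSober X] [T0Space Y] [QuasiSober Y]
    (e : Opens X ≃o Opens Y) : ∃ π : Y ≃ₜ X, ∀ U : Opens X, (e U : Set Y) = π ⁻¹' U := by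
  obtain ⟨f, hf, hfe⟩ := exists_continuous_preimage_eq e
  obtain ⟨g, hg, hge⟩ := exists_continuous_preimage_eq e.symm
  have hgf : g ∘ f = id := eq_of_forall_preimage_opens_eq fun V => by
    rw [Set.preimage_comp, hge, hfe, e.apply_symm_apply, Set.preimage_id]
  have hfg : f ∘ g = id := eq_of_forall_preimage_opens_eq fun U => by
    rw [Set.preimage_comp, hfe, hge, e.symm_apply_apply, Set.preimage_id]
  exact ⟨⟨⟨f, g, congrFun hgf, congrFun hfg⟩, hf, hg⟩, fun U => (hfe U).symm⟩

end

/-- If `X` and `Y` are point-complete (sober) T₀-spaces and `Ψ : O(X) → O(Y)` is an order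
isomorphism, then there is a unique homeomorphism `π : Y → X` with `Ψ(U) = π⁻¹(U)` for all
open `U ⊆ X`. -/
theorem stmt4 {X Y : Type*} [TopologicalSpace X] [TopologicalSpace Y]
    [T0Space X] [QuasiSober X] [T0Space Y] [QuasiSober Y]
    (Ψ : Opens X → Opens Y) (hbij : Function.Bijective Ψ)
    (hord : ∀ U₁ U₂ : Opens X, U₁ ≤ U₂ ↔ Ψ U₁ ≤ Ψ U₂) :
    ∃! π : Y ≃ₜ X, ∀ U : Opens X, (Ψ U : Set Y) = ⇑π ⁻¹' (U : Set X) := by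
  let e : Opens X ≃o Opens Y := ⟨Equiv.ofBijective Ψ hbij, (hord _ _).symm⟩
  obtain ⟨π, hπ⟩ := exists_homeomorph_preimage_eq e
  exact ⟨π, hπ, fun π' hπ' => Homeomorph.ext <| congrFun <|
    eq_of_forall_preimage_opens_eq fun U => (hπ' U).symm.trans (hπ U)⟩
end

section
/- Let π : Y → X be a continuous surjective map between topological spaces. Then the following are equivalent: (a) for every closed subset G ⊆ Y, the set {x ∈ X : π⁻¹(cl({x})) ⊆ G} is closed in X; (b) for every lower semicontinuous function f : Y → [0,∞], the function x ↦ sup{f(y) : y ∈ π⁻¹(cl({x}))} (supremum taken in the extended nonnegative reals) is lower semicontinuous on X. -/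
/-! For any family of sets `S x ⊆ Y`, the sublevel set `{x | ⨆ y ∈ S x, f y ≤ t}` is
`{x | S x ⊆ {f ≤ t}}`, so (a) gives (b); conversely, applying (b) to the lower semicontinuous
function that is `⊥` on `G` and `⊤` off `G` and taking its `⊥`-sublevel set gives (a). -/

open Set

section SupOverFamily

variable {X Y α : Type*} [CompleteLinearOrder α]

theorem preimage_iSup₂_mem_Iic (S : X → Set Y) (f : Y → α) (t : α) :
    (fun x => ⨆ y ∈ S x, f y) ⁻¹' Iic t = {x | S x ⊆ f ⁻¹' Iic t} := by
  ext x
  simp [subset_def]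

theorem lowerSemicontinuous_bot_top_of_isClosed [TopologicalSpace Y] {G : Set Y}
    [DecidablePred (· ∈ G)] (hG : IsClosed G) :
    LowerSemicontinuous fun y => if y ∈ G then (⊥ : α) else ⊤ := by
  refine lowerSemicontinuous_iff_isClosed_preimage.2 fun t => ?_
  rcases eq_or_ne t ⊤ with rfl | ht
  · simp
  · convert hG
    ext y
    by_cases hy : y ∈ G <;> simp [hy, ht]

theorem isClosed_setOf_subset_iff_lowerSemicontinuous_iSup₂ [TopologicalSpace X]
    [TopologicalSpace Y] [Nontrivial α] (S : X → Set Y) :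
    (∀ G : Set Y, IsClosed G → IsClosed {x | S x ⊆ G}) ↔
      ∀ f : Y → α, LowerSemicontinuous f → LowerSemicontinuous fun x => ⨆ y ∈ S x, f y := by
  classical
  constructor
  · intro h f hf
    refine lowerSemicontinuous_iff_isClosed_preimage.2 fun t => ?_
    rw [preimage_iSup₂_mem_Iic]
    exact h _ (lowerSemicontinuous_iff_isClosed_preimage.1 hf t)
  · intro h G hG
    have hsub : (fun y => if y ∈ G then (⊥ : α) else ⊤) ⁻¹' Iic ⊥ = G := by
      ext y
      by_cases hy : y ∈ G <;> simp [hy]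
    have hclosed := lowerSemicontinuous_iff_isClosed_preimage.1
      (h _ (lowerSemicontinuous_bot_top_of_isClosed (α := α) hG)) ⊥
    rwa [preimage_iSup₂_mem_Iic, hsub] at hclosed

end SupOverFamily

theorem stmt6_general {Y X : Type*} [TopologicalSpace Y] [TopologicalSpace X]
    (π : Y → X) :
    (∀ G : Set Y, IsClosed G → IsClosed {x : X | π ⁻¹' closure {x} ⊆ G}) ↔
      (∀ f : Y → ENNReal, LowerSemicontinuous f →
        LowerSemicontinuous fun x : X => ⨆ y ∈ π ⁻¹' closure {x}, f y) :=
  isClosed_setOf_subset_iff_lowerSemicontinuous_iSup₂ fun x => π ⁻¹' closure {x}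

/-- For a continuous surjection `π : Y → X`: the set `{x : π⁻¹(cl{x}) ⊆ G}` is closed for
every closed `G ⊆ Y` iff for every lower semicontinuous `f : Y → [0,∞]` the function
`x ↦ sup f(π⁻¹(cl{x}))` is lower semicontinuous. -/
theorem stmt6 {Y X : Type*} [TopologicalSpace Y] [TopologicalSpace X]
    (π : Y → X) (hc : Continuous π) (hs : Function.Surjective π) :
    (∀ G : Set Y, IsClosed G → IsClosed {x : X | π ⁻¹' closure {x} ⊆ G}) ↔
      (∀ f : Y → ENNReal, LowerSemicontinuous f →
        LowerSemicontinuous fun x : X => ⨆ y ∈ π ⁻¹' closure {x}, f y) :=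
  stmt6_general π
end

section
/- Let π : Y → X be a continuous map between topological spaces. Then π is pseudo-epimorphic if and only if the map Θ : O(X) → O(π(Y)), Θ(U) := U ∩ π(Y), from the open subsets of X to the open subsets of the subspace π(Y), is bijective (equivalently: U₁ ∩ π(Y) = U₂ ∩ π(Y) implies U₁ = U₂ for all open U₁, U₂ ⊆ X). -/
open TopologicalSpace

/-- A continuous map `π : Y → X` is pseudo-epimorphic iff the map `U ↦ U ∩ π(Y)` from the
open sets of `X` to the open sets of the subspace `π(Y)` is bijective. -/
theorem stmt7 {Y X : Type*} [TopologicalSpace Y] [TopologicalSpace X]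
    (π : Y → X) (hc : Continuous π) :
    (∀ F : Set X, IsClosed F → F ⊆ closure (Set.range π ∩ F)) ↔
      Function.Bijective
        (fun U : Opens X =>
          Opens.comap (⟨Subtype.val, continuous_subtype_val⟩ : C(Set.range π, X)) U) := by
  constructor
  · intro hdense
    constructor
    · -- injective
      intro U₁ U₂ h
      have heq : (Subtype.val ⁻¹' (U₁ : Set X) : Set (Set.range π)) = Subtype.val ⁻¹' (U₂ : Set X) := by
        have := congrArg (fun V : Opens (Set.range π) => (V : Set (Set.range π))) h
        simpa [Opens.coe_comap] using this
      have h' : (U₁ : Set X) ∩ Set.range π = (U₂ : Set X) ∩ Set.range π := by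
        ext x
        constructor
        · rintro ⟨hx1, hx2⟩
          have : (⟨x, hx2⟩ : Set.range π) ∈ (Subtype.val ⁻¹' (U₁ : Set X) : Set (Set.range π)) := hx1
          rw [heq] at this
          exact ⟨this, hx2⟩
        · rintro ⟨hx1, hx2⟩
          have : (⟨x, hx2⟩ : Set.range π) ∈ (Subtype.val ⁻¹' (U₂ : Set X) : Set (Set.range π)) := hx1
          rw [← heq] at this
          exact ⟨this, hx2⟩
      ext x
      constructor
      · intro hx1
        by_contra hx2
        have hF : IsClosed ((U₂ : Set X)ᶜ) := U₂.isOpen.isClosed_compl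
        have hxc := hdense _ hF hx2
        have := mem_closure_iff.mp hxc _ U₁.isOpen hx1
        obtain ⟨z, hz1, hz2, hz3⟩ := this
        have : z ∈ (U₂ : Set X) ∩ Set.range π := by rw [← h']; exact ⟨hz1, hz2⟩
        exact hz3 this.1
      · intro hx1
        by_contra hx2
        have hF : IsClosed ((U₁ : Set X)ᶜ) := U₁.isOpen.isClosed_compl
        have hxc := hdense _ hF hx2
        have := mem_closure_iff.mp hxc _ U₂.isOpen hx1
        obtain ⟨z, hz1, hz2, hz3⟩ := this
        have : z ∈ (U₁ : Set X) ∩ Set.range π := by rw [h']; exact ⟨hz1, hz2⟩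
        exact hz3 this.1
    · -- surjective
      intro V
      obtain ⟨U, hU, hUV⟩ := V.isOpen
      exact ⟨⟨U, hU⟩, Opens.ext hUV⟩
  · intro hbij F hF x hx
    rw [mem_closure_iff]
    intro U hU hxU
    by_contra hne
    push_neg at hne
    have key : (Fᶜ ∪ U) ∩ Set.range π = Fᶜ ∩ Set.range π := by
      ext z
      constructor
      · rintro ⟨hz1 | hz1, hz2⟩
        · exact ⟨hz1, hz2⟩
        · refine ⟨fun hzF => ?_, hz2⟩
          exact Set.eq_empty_iff_forall_notMem.mp hne z ⟨hz1, hz2, hzF⟩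
      · rintro ⟨hz1, hz2⟩; exact ⟨Or.inl hz1, hz2⟩
    have : (⟨Fᶜ ∪ U, hF.isOpen_compl.union hU⟩ : Opens X) = ⟨Fᶜ, hF.isOpen_compl⟩ := by
      apply hbij.injective
      apply Opens.ext
      ext z
      simp only [Opens.comap, Set.mem_preimage]
      constructor
      · intro hz
        have : (z : X) ∈ (Fᶜ ∪ U) ∩ Set.range π := ⟨hz, z.2⟩
        rw [key] at this
        exact this.1
      · intro hz
        exact Or.inl hz
    have hxU' : x ∈ Fᶜ ∪ U := Or.inr hxU
    rw [Opens.ext_iff] at this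
    simp only [Opens.coe_mk] at this
    rw [this] at hxU'
    exact hxU' hx
end

section
/- Let Y and X be topological spaces and let R ⊆ Y × X be a subset whose image under the first projection is all of Y. For y ∈ Y set λ(y) := {x ∈ X : (y,x) ∈ R}. Then the map (y,x) ↦ y from R (with the subspace topology of Y × X) onto Y is open if and only if for every subset V ⊆ Y and every y ∈ cl(V), one has λ(y) ⊆ cl(⋃_{v ∈ V} λ(v)). -/
/-- Openness of the first-coordinate projection of a relation `R ⊆ Y × X` with full projection
onto `Y` is equivalent to lower semicontinuity of the fiber map `λ(y) = {x : (y,x) ∈ R}`. -/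
theorem stmt8 {Y X : Type*} [TopologicalSpace Y] [TopologicalSpace X]
    (R : Set (Y × X)) (hR : ∀ y : Y, ∃ x : X, (y, x) ∈ R) :
    IsOpenMap (fun z : R => z.1.1) ↔
      ∀ (V : Set Y) (y : Y), y ∈ closure V →
        {x : X | (y, x) ∈ R} ⊆ closure (⋃ v ∈ V, {x : X | (v, x) ∈ R}) := by
  constructor
  · intro hopen V y hy x hx
    rw [mem_closure_iff]
    intro U hU hxU
    have hW : IsOpen {z : R | (z : Y × X).2 ∈ U} :=
      hU.preimage (continuous_snd.comp continuous_subtype_val)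
    have himg := hopen _ hW
    have hyimg : y ∈ (fun z : R => z.1.1) '' {z : R | (z : Y × X).2 ∈ U} :=
      ⟨⟨(y, x), hx⟩, hxU, rfl⟩
    rcases mem_closure_iff.mp hy _ himg hyimg with ⟨v, hvimg, hvV⟩
    rcases hvimg with ⟨⟨⟨v', u⟩, hvu⟩, hu, hv'⟩
    simp only [Set.mem_setOf_eq] at hu
    cases hv'
    exact ⟨u, hu, Set.mem_biUnion hvV hvu⟩
  · intro h W hW
    rcases isOpen_induced_iff.mp hW with ⟨A, hA, rfl⟩
    rw [← isClosed_compl_iff, ← closure_subset_iff_isClosed]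
    intro y hy
    by_contra hyS
    simp only [Set.mem_compl_iff, not_not] at hyS
    rcases hyS with ⟨⟨⟨y', x⟩, hyxR⟩, hzA, hz1⟩
    simp only at hz1
    subst hz1
    rcases isOpen_prod_iff.mp hA y' x hzA with ⟨P, Q, hP, hQ, hyP, hxQ, hPQ⟩
    set S := (fun z : R => z.1.1) '' (Subtype.val ⁻¹' A) with hS
    have hy' : y' ∈ closure (Sᶜ ∩ P) := by
      rw [mem_closure_iff]
      intro O hO hyO
      rcases mem_closure_iff.mp hy (O ∩ P) (hO.inter hP) ⟨hyO, hyP⟩ with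
        ⟨v, ⟨hvO, hvP⟩, hvS⟩
      exact ⟨v, hvO, hvS, hvP⟩
    have hsub := h (Sᶜ ∩ P) y' hy' hyxR
    rcases mem_closure_iff.mp hsub Q hQ hxQ with ⟨u, huQ, huU⟩
    rcases Set.mem_iUnion₂.mp huU with ⟨v, ⟨hvS, hvP⟩, hvu⟩
    exact hvS ⟨⟨(v, u), hvu⟩, hPQ ⟨hvP, huQ⟩, rfl⟩
end

section
/- Let E be a Hausdorff locally convex topological real vector space, let K ⊆ E be a nonempty compact convex subset, and let ∂K denote the set of extreme points of K. Let Y be a topological space and R ⊆ Y × K a subset whose image under the first projection is all of Y; for y ∈ Y set λ(y) := {x ∈ K : (y,x) ∈ R}. Assume that for every y ∈ Y, λ(y) equals the closure of the convex hull of λ(y) ∩ ∂K. Then the map (y,x) ↦ y from R (with the subspace topology of Y × E) to Y is open if and only if the map (y,x) ↦ y from R ∩ (Y × ∂K) (with the subspace topology) to Y is open. -/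
/-!
Openness of the projection of a relation `S ⊆ Y × Z` onto `Y` is lower hemicontinuity of its
fibre map. Lower hemicontinuity passes to convex hulls (a convex combination depends continuously
on the points combined) and to closures, which gives one direction. For the other, Milman's
converse of the Krein–Milman theorem says that an extreme point of `K` lying in an open set `U`
is not in the closed convex hull `H` of `K \ U`. So if `λ(y₀)` has an extreme point in `U`, then
`λ(y)` meets the open set `Hᶜ` for all `y` near `y₀`; as `λ(y)` is the closed convex hull of its
extreme points, they cannot all lie in `K \ U`.
-/

open Set Filter Topology TopologicalSpace

section Hemicontinuity

variable {Y Z : Type*} [TopologicalSpace Y] [TopologicalSpace Z]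

theorem isOpenMap_subtype_fst_iff_lowerHemicontinuous (S : Set (Y × Z)) :
    IsOpenMap (fun z : S => z.1.1) ↔ LowerHemicontinuous fun y => {x | (y, x) ∈ S} := by
  have hB := ((isTopologicalBasis_opens (α := Y)).prod
    (isTopologicalBasis_opens (α := Z))).isInducing (IsInducing.subtypeVal (t := S))
  have himage (V : Set Y) (U : Set Z) :
      (fun z : S => z.1.1) '' (Subtype.val ⁻¹' (V ×ˢ U)) =
        V ∩ {y | ({x | (y, x) ∈ S} ∩ U).Nonempty} := by
    ext y
    constructor
    · rintro ⟨⟨⟨y, x⟩, hS⟩, ⟨hy, hx⟩, rfl⟩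
      exact ⟨hy, x, hS, hx⟩
    · rintro ⟨hy, x, hS, hx⟩
      exact ⟨⟨(y, x), hS⟩, ⟨hy, hx⟩, rfl⟩
  rw [hB.isOpenMap_iff, lowerHemicontinuous_iff_isOpen_inter_nonempty]
  simp only [forall_mem_image, forall_mem_image2, mem_ofPred_eq, himage]
  exact ⟨fun h U hU => by simpa using h univ isOpen_univ U hU,
    fun h V hV U hU => hV.inter (h U hU)⟩

theorem LowerHemicontinuous.closure {f : Y → Set Z} (hf : LowerHemicontinuous f) :
    LowerHemicontinuous fun y => closure (f y) := by
  rw [lowerHemicontinuous_iff_isOpen_inter_nonempty] at hf ⊢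
  intro U hU
  simpa only [closure_inter_open_nonempty_iff hU] using hf U hU

end Hemicontinuity

section Hull

variable {𝕜 E Y : Type*} [Field 𝕜] [LinearOrder 𝕜] [IsStrictOrderedRing 𝕜] [AddCommGroup E]
  [Module 𝕜 E] [TopologicalSpace E] [ContinuousAdd E] [ContinuousConstSMul 𝕜 E]
  [TopologicalSpace Y]

theorem LowerHemicontinuous.convexHull {f : Y → Set E} (hf : LowerHemicontinuous f) :
    LowerHemicontinuous fun y => convexHull 𝕜 (f y) := by
  rw [lowerHemicontinuous_iff_isOpen_inter_nonempty] at hf ⊢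
  intro U hU
  rw [isOpen_iff_mem_nhds]
  rintro y₀ ⟨p, hp, hpU⟩
  obtain ⟨ι, _, w, z, hw₀, hw₁, hz, rfl⟩ := mem_convexHull_iff_exists_fintype.1 hp
  have hsum : Continuous fun v : ι → E => ∑ i, w i • v i := by fun_prop
  obtain ⟨O, hO, hOU⟩ := isOpen_pi_iff'.1 (hU.preimage hsum) z hpU
  have hnear : ∀ᶠ y in 𝓝 y₀, ∀ i, (f y ∩ O i).Nonempty :=
    eventually_all.2 fun i => (hf (O i) (hO i).1).mem_nhds ⟨z i, hz i, (hO i).2⟩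
  filter_upwards [hnear] with y hy
  choose v hvf hvO using hy
  exact ⟨_, mem_convexHull_of_exists_fintype w v hw₀ hw₁ hvf rfl, hOU fun i _ => hvO i⟩

end Hull

section Milman

variable {E : Type*} [AddCommGroup E] [Module ℝ E] [TopologicalSpace E] [IsTopologicalAddGroup E]
  [ContinuousSMul ℝ E]

theorem isCompact_convexJoin {s t : Set E} (hs : IsCompact s) (ht : IsCompact t) :
    IsCompact (convexJoin ℝ s t) := by
  have : convexJoin ℝ s t =
      (fun p : ℝ × E × E => (1 - p.1) • p.2.1 + p.1 • p.2.2) '' (Icc 0 1 ×ˢ s ×ˢ t) := by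
    ext x
    simp only [mem_convexJoin, segment_eq_image, mem_image, mem_prod, Prod.exists]
    aesop
  rw [this]
  exact (isCompact_Icc.prod (hs.prod ht)).image (by fun_prop)

theorem isCompact_convexHull_union {s t : Set E} (hs : IsCompact s) (ht : IsCompact t)
    (hsc : Convex ℝ s) (htc : Convex ℝ t) : IsCompact (convexHull ℝ (s ∪ t)) := by
  rcases s.eq_empty_or_nonempty with rfl | hs₀
  · simpa [htc.convexHull_eq] using ht
  rcases t.eq_empty_or_nonempty with rfl | ht₀
  · simpa [hsc.convexHull_eq] using hs
  rw [convexHull_union hs₀ ht₀, hsc.convexHull_eq, htc.convexHull_eq]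
  exact isCompact_convexJoin hs ht

theorem isCompact_convexHull_biUnion {ι : Type*} (t : Finset ι) {C : ι → Set E}
    (hC : ∀ i ∈ t, IsCompact (C i)) (hCc : ∀ i ∈ t, Convex ℝ (C i)) :
    IsCompact (convexHull ℝ (⋃ i ∈ t, C i)) := by
  classical
  induction t using Finset.induction_on with
  | empty => simp
  | insert a t _ ih =>
    rw [Finset.set_biUnion_insert, ← convexHull_convexHull_union_right]
    exact isCompact_convexHull_union (hC a (t.mem_insert_self a))
      (ih (fun i hi => hC i (Finset.mem_insert_of_mem hi))
        fun i hi => hCc i (Finset.mem_insert_of_mem hi))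
      (hCc a (t.mem_insert_self a)) (convex_convexHull ℝ _)

/-- Milman: cover `D` by finitely many compact convex pieces `K ∩ (d + V)`, `d ∈ D`. The convex
hull of their union is compact, so it contains `closure (convexHull ℝ D)`, and an extreme point
of `K` in it must lie in one of the pieces. -/
theorem extremePoints_inter_closure_convexHull_subset [LocallyConvexSpace ℝ E] [T2Space E]
    {K D : Set E} (hK : IsCompact K) (hKc : Convex ℝ K) (hD : IsClosed D) (hDK : D ⊆ K) :
    K.extremePoints ℝ ∩ closure (convexHull ℝ D) ⊆ D := by
  rintro x ⟨hxK, hxD⟩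
  rw [← hD.closure_eq, mem_closure_iff_nhds]
  intro N hN
  have hM : (x - ·) ⁻¹' N ∈ 𝓝 (0 : E) :=
    (continuous_const.sub continuous_id).continuousAt.preimage_mem_nhds (by simpa using hN)
  obtain ⟨V, ⟨hV0, hVcl, hVc⟩, hVN⟩ := (nhds_hasBasis_absConvex_closed ℝ E).mem_iff.1 hM
  let T : E → Set E := fun d => (fun y => y - d) ⁻¹' V
  have hT_nhds (d : E) : T d ∈ 𝓝 d :=
    (continuous_id.sub continuous_const).continuousAt.preimage_mem_nhds (by simpa using hV0)
  have hT_closed (d : E) : IsClosed (T d) := hVcl.preimage (continuous_id.sub continuous_const)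
  have hT_convex (d : E) : Convex ℝ (T d) := by
    simpa only [T, sub_eq_add_neg] using hVc.2.translate_preimage_left (-d)
  obtain ⟨t, htD, hDt⟩ := (hK.of_isClosed_subset hD hDK).elim_nhds_subcover T fun d _ => hT_nhds d
  have hCK : convexHull ℝ (⋃ d ∈ t, K ∩ T d) ⊆ K :=
    convexHull_min (iUnion₂_subset fun _ _ => inter_subset_left) hKc
  have hCcompact : IsCompact (convexHull ℝ (⋃ d ∈ t, K ∩ T d)) :=
    isCompact_convexHull_biUnion t (fun d _ => hK.inter_right (hT_closed d))
      fun d _ => hKc.inter (hT_convex d)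
  have hDC : D ⊆ ⋃ d ∈ t, K ∩ T d := fun y hy => by
    obtain ⟨d, hdt, hyd⟩ := mem_iUnion₂.1 (hDt hy)
    exact mem_iUnion₂.2 ⟨d, hdt, hDK hy, hyd⟩
  have hxC : x ∈ convexHull ℝ (⋃ d ∈ t, K ∩ T d) :=
    closure_minimal (convexHull_mono hDC) hCcompact.isClosed hxD
  obtain ⟨d, hdt, -, hxd⟩ := mem_iUnion₂.1 (extremePoints_convexHull_subset
    (inter_extremePoints_subset_extremePoints_of_subset hCK ⟨hxC, hxK⟩))
  exact ⟨d, by simpa using hVN hxd, htD d hdt⟩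

theorem lowerHemicontinuous_inter_extremePoints [LocallyConvexSpace ℝ E] [T2Space E]
    {Y : Type*} [TopologicalSpace Y] {K : Set E} (hK : IsCompact K) (hKc : Convex ℝ K)
    {f : Y → Set E} (hf : LowerHemicontinuous f)
    (hfK : ∀ y, f y ⊆ closure (convexHull ℝ (f y ∩ K.extremePoints ℝ))) :
    LowerHemicontinuous fun y => f y ∩ K.extremePoints ℝ := by
  rw [lowerHemicontinuous_iff_isOpen_inter_nonempty] at hf ⊢
  intro U hU
  rw [isOpen_iff_mem_nhds]
  rintro y₀ ⟨x₀, ⟨hx₀f, hx₀K⟩, hx₀U⟩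
  set H := closure (convexHull ℝ (K \ U))
  have hx₀H : x₀ ∉ H := fun hx₀H => (extremePoints_inter_closure_convexHull_subset hK hKc
    (hK.isClosed.sdiff hU) sdiff_subset ⟨hx₀K, hx₀H⟩).2 hx₀U
  filter_upwards [(hf Hᶜ isClosed_closure.isOpen_compl).mem_nhds ⟨x₀, hx₀f, hx₀H⟩]
    with y ⟨x, hxf, hxH⟩
  by_contra hempty
  refine hxH (closure_mono (convexHull_mono ?_) (hfK y hxf))
  rintro x' ⟨hx'f, hx'K⟩
  exact ⟨extremePoints_subset hx'K, fun hx'U => hempty ⟨x', ⟨hx'f, hx'K⟩, hx'U⟩⟩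

end Milman

theorem stmt9_general {E : Type*} [AddCommGroup E] [Module ℝ E] [TopologicalSpace E]
    [IsTopologicalAddGroup E] [ContinuousSMul ℝ E] [LocallyConvexSpace ℝ E] [T2Space E]
    {Y : Type*} [TopologicalSpace Y]
    (K : Set E) (hK : IsCompact K) (hKconv : Convex ℝ K)
    (R : Set (Y × E))
    (hfaces : ∀ y : Y, {x : E | (y, x) ∈ R} =
      closure (convexHull ℝ ({x : E | (y, x) ∈ R} ∩ K.extremePoints ℝ))) :
    IsOpenMap (fun z : R => z.1.1) ↔
      IsOpenMap
        (fun z : (R ∩ (Set.univ ×ˢ K.extremePoints ℝ) : Set (Y × E)) => z.1.1) := by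
  have hfiber (y : Y) : {x | (y, x) ∈ R ∩ univ ×ˢ K.extremePoints ℝ} =
      {x | (y, x) ∈ R} ∩ K.extremePoints ℝ := by
    ext x
    simp
  simp only [isOpenMap_subtype_fst_iff_lowerHemicontinuous, hfiber]
  refine ⟨fun h =>
    lowerHemicontinuous_inter_extremePoints hK hKconv h fun y => (hfaces y).le, fun h => ?_⟩
  rw [show (fun y => {x | (y, x) ∈ R}) = _ from funext hfaces]
  exact h.convexHull.closure

/-- Let `K` be a nonempty compact convex subset of a Hausdorff locally convex real topological
vector space, `∂K` its set of extreme points, and `R ⊆ Y × K` a relation with full projection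
onto `Y` whose fibers `λ(y)` are closed convex hulls of `λ(y) ∩ ∂K`.  Then the projection from
`R` to `Y` is open iff the projection from `R ∩ (Y × ∂K)` to `Y` is open. -/
theorem stmt9 {E : Type*} [AddCommGroup E] [Module ℝ E] [TopologicalSpace E]
    [IsTopologicalAddGroup E] [ContinuousSMul ℝ E] [LocallyConvexSpace ℝ E] [T2Space E]
    {Y : Type*} [TopologicalSpace Y]
    (K : Set E) (hK : IsCompact K) (hKconv : Convex ℝ K) (hKne : K.Nonempty)
    (R : Set (Y × E)) (hRK : ∀ z ∈ R, z.2 ∈ K)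
    (hR : ∀ y : Y, ∃ x : E, (y, x) ∈ R)
    (hfaces : ∀ y : Y, {x : E | (y, x) ∈ R} =
      closure (convexHull ℝ ({x : E | (y, x) ∈ R} ∩ K.extremePoints ℝ))) :
    IsOpenMap (fun z : R => z.1.1) ↔
      IsOpenMap
        (fun z : (R ∩ (Set.univ ×ˢ K.extremePoints ℝ) : Set (Y × E)) => z.1.1) :=
  stmt9_general K hK hKconv R hfaces
end

section
/- Let Y be a topological space and let 𝒵 be a collection of open subsets of Y containing ∅ and Y, closed under arbitrary unions, and closed under interiors of arbitrary intersections (i.e., (⋂_α V_α)° ∈ 𝒵 whenever all V_α ∈ 𝒵). Then there exists an order-preserving map Θ : O(Y) → O(Y) such that: Θ(V) = V for every V ∈ 𝒵; the range of Θ is exactly 𝒵; Θ∘Θ = Θ; Θ(V) ⊆ V for every open V ⊆ Y; and Θ((⋂_α V_α)°) = (⋂_α Θ(V_α))° for every family {V_α} of open subsets of Y. -/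
open TopologicalSpace

/-- For a collection `𝒵` of open subsets of `Y` containing `∅, Y` and closed under arbitrary
unions and interiors of arbitrary intersections, there is an idempotent order-preserving
retraction `Θ : O(Y) → O(Y)` onto `𝒵` with `Θ(V) ⊆ V` commuting with interiors of
intersections. -/
theorem stmt10 {Y : Type*} [TopologicalSpace Y] (Z : Set (Opens Y))
    (hbot : ⊥ ∈ Z) (htop : ⊤ ∈ Z)
    (hSup : ∀ S : Set (Opens Y), S ⊆ Z → sSup S ∈ Z)
    (hInf : ∀ S : Set (Opens Y), S ⊆ Z → sInf S ∈ Z) :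
    ∃ Θ : Opens Y → Opens Y, Monotone Θ ∧ (∀ V ∈ Z, Θ V = V) ∧ Set.range Θ = Z ∧
      (∀ V, Θ (Θ V) = Θ V) ∧ (∀ V, Θ V ≤ V) ∧
      (∀ S : Set (Opens Y), Θ (sInf S) = sInf (Θ '' S)) := by
  set Θ : Opens Y → Opens Y := fun V => sSup {W | W ∈ Z ∧ W ≤ V} with hΘ
  have hmem : ∀ V, Θ V ∈ Z := fun V => hSup _ (fun W hW => hW.1)
  have hle : ∀ V, Θ V ≤ V := fun V => sSup_le (fun W hW => hW.2)
  have hmono : Monotone Θ := fun V₁ V₂ h =>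
    sSup_le_sSup (fun W hW => ⟨hW.1, hW.2.trans h⟩)
  have hfix : ∀ V ∈ Z, Θ V = V := fun V hV =>
    le_antisymm (hle V) (le_sSup ⟨hV, le_rfl⟩)
  refine ⟨Θ, hmono, hfix, ?_, fun V => hfix _ (hmem V), hle, ?_⟩
  · ext W
    exact ⟨fun ⟨V, hV⟩ => hV ▸ hmem V, fun hW => ⟨W, hfix W hW⟩⟩
  · intro S
    refine le_antisymm (le_sInf ?_) ?_
    · rintro _ ⟨V, hV, rfl⟩
      exact hmono (sInf_le hV)
    · have h1 : sInf (Θ '' S) ∈ Z := by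
        refine hInf _ ?_
        rintro _ ⟨V, hV, rfl⟩
        exact hmem V
      refine le_sSup ⟨h1, le_sInf ?_⟩
      intro V hV
      exact (sInf_le (Set.mem_image_of_mem Θ hV)).trans (hle V)
end

section
/- Let B be a C*-algebra, σ a *-automorphism of B, and D a closed *-subalgebra of B. If the closed linear span of {d·σ(e) : d, e ∈ D} equals σ(D), then for every integer k ≥ 1 the closed linear span of {d·σᵏ(e) : d, e ∈ D} equals σᵏ(D). -/
lemma aux12 {B : Type*} [NonUnitalNormedRing B] [NormedSpace ℂ B]
    (L : B →ₗ[ℂ] B) (hL : Continuous L) (P : Submodule ℂ B) (hP : IsClosed (P : Set B))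
    {s : Set B} (hs : ∀ x ∈ s, L x ∈ P) {y : B}
    (hy : y ∈ closure (Submodule.span ℂ s : Set B)) : L y ∈ P := by
  have h1 : Submodule.span ℂ s ≤ P.comap L := Submodule.span_le.mpr fun x hx => hs x hx
  have h2 : (Submodule.span ℂ s : Set B) ⊆ L ⁻¹' (P : Set B) := fun x hx => h1 hx
  exact closure_minimal h2 (hP.preimage hL) hy



/-- If the closed linear span of `D·σ(D)` equals `σ(D)`, then for every `k ≥ 1` the closed
linear span of `D·σᵏ(D)` equals `σᵏ(D)`. -/
theorem stmt12 {B : Type*} [NonUnitalNormedRing B] [StarRing B] [CStarRing B]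
    [NormedSpace ℂ B] [IsScalarTower ℂ B B] [SMulCommClass ℂ B B] [StarModule ℂ B]
    [CompleteSpace B]
    (σ : B ≃⋆ₐ[ℂ] B) (D : NonUnitalStarSubalgebra ℂ B) (hD : IsClosed (D : Set B))
    (hα : closure (Submodule.span ℂ {x : B | ∃ d ∈ D, ∃ e ∈ D, x = d * σ e} : Set B)
        = ⇑σ '' (D : Set B)) :
    ∀ k : ℕ, 1 ≤ k →
      closure
          (Submodule.span ℂ {x : B | ∃ d ∈ D, ∃ e ∈ D, x = d * (⇑σ)^[k] e} : Set B)
        = (⇑σ)^[k] '' (D : Set B) := by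
  letI i : NonUnitalCStarAlgebra B := { }
  have hiso : Isometry ⇑σ := @StarAlgEquiv.isometry _ _ _ i i _ _ _ σ
  have hiso' : Isometry ⇑σ.symm := @StarAlgEquiv.isometry _ _ _ i i _ _ _ σ.symm
  -- linear maps
  let Lσ : B →ₗ[ℂ] B := { toFun := ⇑σ, map_add' := map_add σ, map_smul' := map_smul σ }
  let Lk : ℕ → (B →ₗ[ℂ] B) := fun k => Lσ ^ k
  have hLk : ∀ k x, Lk k x = (⇑σ)^[k] x := by
    intro k x
    rw [show Lk k = Lσ ^ k from rfl, Module.End.pow_apply]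
    rfl
  have hcont : ∀ k : ℕ, Continuous ((⇑σ)^[k]) := by
    intro k
    induction k with
    | zero => simpa using continuous_id
    | succ n ihn => rw [Function.iterate_succ]; exact ihn.comp hiso.continuous
  have hcont' : ∀ k : ℕ, Continuous ((⇑σ.symm)^[k]) := by
    intro k
    induction k with
    | zero => simpa using continuous_id
    | succ n ihn => rw [Function.iterate_succ]; exact ihn.comp hiso'.continuous
  have hmul : ∀ (k : ℕ) (a b : B), (⇑σ)^[k] (a * b) = (⇑σ)^[k] a * (⇑σ)^[k] b := by
    intro k
    induction k with
    | zero => intro a b; simp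
    | succ n ihn =>
      intro a b
      simp only [Function.iterate_succ_apply', ihn, map_mul]
  intro k hk
  induction k, hk using Nat.le_induction with
  | base => simpa using hα
  | succ k hk ih =>
    -- sets
    set T1 : Set B := {x : B | ∃ d ∈ D, ∃ e ∈ D, x = d * σ e} with hT1
    set Tk : Set B := {x : B | ∃ d ∈ D, ∃ e ∈ D, x = d * (⇑σ)^[k] e} with hTk
    set Tk1 : Set B := {x : B | ∃ d ∈ D, ∃ e ∈ D, x = d * (⇑σ)^[k+1] e} with hTk1
    -- σ '' D as a tool
    have hσD : ∀ a b : B, a ∈ D → b ∈ D → ∃ f ∈ D, a * σ b = σ f := by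
      intro a b ha hb
      have : a * σ b ∈ closure (Submodule.span ℂ T1 : Set B) :=
        subset_closure (Submodule.subset_span ⟨a, ha, b, hb, rfl⟩)
      rw [hα] at this
      obtain ⟨f, hf, hfe⟩ := this
      exact ⟨f, hf, hfe.symm⟩
    -- M : closure of span Tk1
    set M : Submodule ℂ B := (Submodule.span ℂ Tk1).topologicalClosure with hMdef
    have hMclosed : IsClosed (M : Set B) := Submodule.isClosed_topologicalClosure _
    have hMcoe : (M : Set B) = closure (Submodule.span ℂ Tk1 : Set B) := rfl
    have hTk1M : Tk1 ⊆ (M : Set B) := fun x hx =>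
      subset_closure (Submodule.subset_span hx)
    -- claim A
    have claimA : ∀ d ∈ D, ∀ e ∈ D, (⇑σ)^[k] d * (⇑σ)^[k+1] e ∈ M := by
      intro d hd e he
      have hyd : (⇑σ)^[k] d ∈ closure (Submodule.span ℂ Tk : Set B) := by
        rw [ih]; exact ⟨d, hd, rfl⟩
      have := aux12 (LinearMap.mulRight ℂ ((⇑σ)^[k+1] e))
        (continuous_mul_right _) M hMclosed (s := Tk) ?_ hyd
      · simpa using this
      · rintro x ⟨d', hd', e', he', rfl⟩
        obtain ⟨f, hf, hfe⟩ := hσD e' e he' he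
        have : d' * (⇑σ)^[k] e' * (⇑σ)^[k+1] e = d' * (⇑σ)^[k+1] f := by
          rw [mul_assoc, Function.iterate_succ_apply σ k e, ← hmul k, hfe,
            ← Function.iterate_succ_apply]
        simp only [LinearMap.mulRight_apply]
        rw [this]
        exact hTk1M ⟨d', hd', f, hf, rfl⟩
    -- N : image submodule
    set N : Submodule ℂ B :=
      Submodule.map (Lk (k+1)) D.toNonUnitalSubalgebra.toSubmodule with hNdef
    have hNcoe : (N : Set B) = (⇑σ)^[k+1] '' (D : Set B) := by
      rw [hNdef, Submodule.map_coe, show ⇑(Lk (k+1)) = (⇑σ)^[k+1] from funext (hLk (k+1))]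
      rfl
    have hNclosed : IsClosed (N : Set B) := by
      rw [hNcoe]
      have heq : (⇑σ)^[k+1] '' (D : Set B) = ((⇑σ.symm)^[k+1]) ⁻¹' (D : Set B) :=
        congrFun (Set.image_eq_preimage_of_inverse
          (Function.LeftInverse.iterate σ.symm_apply_apply (k+1))
          (Function.LeftInverse.iterate σ.apply_symm_apply (k+1))) (D : Set B)
      rw [heq]
      exact hD.preimage (hcont' (k+1))
    -- claim B : generators of Tk1 live in N
    have claimB : Tk1 ⊆ (N : Set B) := by
      rintro x ⟨d, hd, e, he, rfl⟩
      have hy : σ e ∈ closure (Submodule.span ℂ T1 : Set B) := by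
        rw [hα]; exact ⟨e, he, rfl⟩
      have := aux12 ((LinearMap.mulLeft ℂ d).comp (Lk k))
        ((continuous_mul_left d).comp ((hcont k).congr fun x => (hLk k x).symm))
        N hNclosed (s := T1) ?_ hy
      · have h2 : ((LinearMap.mulLeft ℂ d).comp (Lk k)) (σ e) = d * (⇑σ)^[k+1] e := by
          simp [LinearMap.comp_apply, hLk, Function.iterate_succ_apply]
        rwa [h2] at this
      · rintro x ⟨f, hf, g, hg, rfl⟩
        have hdf : d * (⇑σ)^[k] f ∈ (⇑σ)^[k] '' (D : Set B) := by
          rw [← ih]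
          exact subset_closure (Submodule.subset_span ⟨d, hd, f, hf, rfl⟩)
        obtain ⟨h, hh, hhe⟩ := hdf
        obtain ⟨m, hm, hme⟩ := hσD h g hh hg
        have hval : ((LinearMap.mulLeft ℂ d).comp (Lk k)) (f * σ g) = (⇑σ)^[k+1] m := by
          simp only [LinearMap.comp_apply, LinearMap.mulLeft_apply, hLk]
          rw [hmul k, ← mul_assoc, ← hhe, ← hmul k, hme, ← Function.iterate_succ_apply]
        rw [hval]
        have : (⇑σ)^[k+1] m ∈ (N : Set B) := by
          rw [hNcoe]; exact ⟨m, hm, rfl⟩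
        exact this
    -- conclude
    apply subset_antisymm
    · rw [← hNcoe]
      exact closure_minimal (Submodule.span_le.mpr claimB) hNclosed
    · rintro y ⟨a, ha, rfl⟩
      have hy : σ a ∈ closure (Submodule.span ℂ T1 : Set B) := by
        rw [hα]; exact ⟨a, ha, rfl⟩
      have := aux12 (Lk k) ((hcont k).congr fun x => (hLk k x).symm)
        M hMclosed (s := T1) ?_ hy
      · have h2 : Lk k (σ a) = (⇑σ)^[k+1] a := by
          rw [hLk, ← Function.iterate_succ_apply]
        rw [h2] at this
        exact this
      · rintro x ⟨d, hd, e, he, rfl⟩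
        have hval : Lk k (d * σ e) = (⇑σ)^[k] d * (⇑σ)^[k+1] e := by
          rw [hLk, hmul k, ← Function.iterate_succ_apply]
        rw [hval]
        exact claimA d hd e he
end

section
/- Let B be a C*-algebra, σ a *-automorphism of B, and D a closed *-subalgebra of B such that d·σᵏ(e) ∈ σᵏ(D) for all d, e ∈ D and all integers k ≥ 1. Then the norm closure of the set of all finite sums ∑_{j ∈ S} σʲ(d_j), where S ranges over finite subsets of ℤ and d_j ∈ D, is the smallest σ-invariant closed *-subalgebra of B containing D; that is, it is a closed *-subalgebra C with σ(C) = C and D ⊆ C, and it is contained in every closed *-subalgebra C' of B with σ(C') = C' and D ⊆ C'. -/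
/-!
The finite sums `∑ σʲ(d_j)` form the span `M` of the translates `σᵏ(D)`, `k ∈ ℤ`. For `j ≤ k`
the hypothesis (or `d * e ∈ D` when `j = k`) gives `σʲ(d) σᵏ(e) = σʲ(d σᵏ⁻ʲ(e)) ∈ σᵏ(D)`; for
`j > k` apply this to the adjoint `σᵏ(e*) σʲ(d*)`. So `M` is a *-subalgebra, and it is mapped
onto itself by every `σⁿ`. Since `σ` is an isometric bijection, the closure of `M` is again
`σ`-invariant, and a closed `σ`-invariant `C' ⊇ D` contains every `σᵏ(D)`, hence `M` and its
closure.
-/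

/-- The integer power `σᵏ` (`k ∈ ℤ`) of a *-automorphism, as a function. -/
noncomputable def starAutZPow {B : Type*} [Add B] [Mul B] [SMul ℂ B] [Star B]
    (σ : B ≃⋆ₐ[ℂ] B) (k : ℤ) : B → B :=
  ⇑(σ.toRingEquiv.toEquiv ^ k)

theorem starAutZPow_eq_coe_zpow {B : Type*} [Add B] [Mul B] [SMul ℂ B] [Star B]
    (σ : B ≃⋆ₐ[ℂ] B) (k : ℤ) : starAutZPow σ k = ⇑(σ ^ k) := by
  let toPerm : (B ≃⋆ₐ[ℂ] B) →* Equiv.Perm B :=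
    MonoidHom.mk' (fun τ => τ.toRingEquiv.toEquiv) fun _ _ => rfl
  exact (congrArg DFunLike.coe (map_zpow toPerm σ k)).symm

theorem StarAlgEquiv.image_zpow_eq_of_image_eq {R A : Type*} [Add A] [Mul A] [SMul R A]
    [Star A] (σ : A ≃⋆ₐ[R] A) {S : Set A} (h : σ '' S = S) (k : ℤ) : ⇑(σ ^ k) '' S = S := by
  have h_symm : ⇑σ⁻¹ '' S = S := by
    conv_lhs => rw [← h, Set.image_image]
    simp [StarAlgEquiv.aut_inv]
  induction k using Int.induction_on with
  | zero => ext; simp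
  | succ n ih =>
    rw [zpow_add_one, show ⇑(σ ^ (n : ℤ) * σ) = ⇑(σ ^ (n : ℤ)) ∘ σ from rfl, Set.image_comp,
      h, ih]
  | pred n ih =>
    rw [zpow_sub_one, show ⇑(σ ^ (-(n : ℤ)) * σ⁻¹) = ⇑(σ ^ (-(n : ℤ))) ∘ ⇑σ⁻¹ from rfl,
      Set.image_comp, h_symm, ih]

section OrbitSpan

variable {R A : Type*} [CommSemiring R] [NonUnitalSemiring A] [StarRing A] [Module R A]

def orbitSpan (σ : A ≃⋆ₐ[R] A) (D : NonUnitalStarSubalgebra R A) : Submodule R A :=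
  ⨆ k : ℤ, D.toSubmodule.map ((σ ^ k : A ≃⋆ₐ[R] A) : A →ₗ[R] A)

variable (σ : A ≃⋆ₐ[R] A) (D : NonUnitalStarSubalgebra R A)

theorem zpow_mem_orbitSpan (k : ℤ) {d : A} (hd : d ∈ D) : (σ ^ k) d ∈ orbitSpan σ D :=
  Submodule.mem_iSup_of_mem k ⟨d, hd, rfl⟩

theorem mem_orbitSpan_iff {x : A} : x ∈ orbitSpan σ D ↔
    ∃ (s : Finset ℤ) (d : ℤ → A), (∀ j ∈ s, d j ∈ D) ∧ x = ∑ j ∈ s, (σ ^ j) (d j) := by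
  constructor
  · intro hx
    obtain ⟨f, hf, rfl⟩ := (Submodule.mem_iSup_iff_exists_finsupp _ x).1 hx
    choose d hdD hd using fun j => Submodule.mem_map.1 (hf j)
    exact ⟨f.support, d, fun j _ => hdD j, Finset.sum_congr rfl fun j _ => (hd j).symm⟩
  · rintro ⟨s, d, hd, rfl⟩
    exact Submodule.sum_mem _ fun j hj => zpow_mem_orbitSpan σ D j (hd j hj)

theorem apply_zpow_mem_orbitSpan (k : ℤ) {x : A} (hx : x ∈ orbitSpan σ D) :
    (σ ^ k) x ∈ orbitSpan σ D := by
  refine Submodule.iSup_induction _ (motive := fun x => (σ ^ k) x ∈ orbitSpan σ D) hx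
    (fun j x hx => ?_) (by simp) fun x y hx hy => by simpa using add_mem hx hy
  obtain ⟨d, hd, rfl⟩ := Submodule.mem_map.1 hx
  rw [LinearMap.coe_coe, ← StarAlgEquiv.mul_apply, ← zpow_add]
  exact zpow_mem_orbitSpan σ D _ hd

theorem image_orbitSpan : ⇑σ '' orbitSpan σ D = orbitSpan σ D := by
  refine subset_antisymm ?_ fun x hx => ⟨(σ ^ (-1 : ℤ)) x, ?_, ?_⟩
  · rintro _ ⟨x, hx, rfl⟩
    simpa using apply_zpow_mem_orbitSpan σ D 1 hx
  · exact apply_zpow_mem_orbitSpan σ D (-1) hx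
  · simp [StarAlgEquiv.aut_inv]

theorem star_mem_orbitSpan {x : A} (hx : x ∈ orbitSpan σ D) : star x ∈ orbitSpan σ D := by
  refine Submodule.iSup_induction _ (motive := fun x => star x ∈ orbitSpan σ D) hx
    (fun j x hx => ?_) (by simp) fun x y hx hy => by simpa using add_mem hx hy
  obtain ⟨d, hd, rfl⟩ := Submodule.mem_map.1 hx
  simpa [← map_star] using zpow_mem_orbitSpan σ D j (star_mem hd)

theorem orbitSpan_le {P : Submodule R A} (hσ : σ '' P = P) (hD : D.toSubmodule ≤ P) :
    orbitSpan σ D ≤ P := by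
  refine iSup_le fun k => ?_
  rintro _ ⟨d, hd, rfl⟩
  rw [← SetLike.mem_coe, ← σ.image_zpow_eq_of_image_eq hσ k]
  exact ⟨d, hD hd, rfl⟩

variable {σ D}

theorem exists_zpow_mul_zpow_eq
    (h : ∀ d ∈ D, ∀ e ∈ D, ∀ k : ℤ, 1 ≤ k → d * (σ ^ k) e ∈ ⇑(σ ^ k) '' D) {j k : ℤ}
    (hjk : j ≤ k) {d e : A} (hd : d ∈ D) (he : e ∈ D) :
    ∃ f ∈ D, (σ ^ j) d * (σ ^ k) e = (σ ^ k) f := by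
  have hmem : d * (σ ^ (k - j)) e ∈ ⇑(σ ^ (k - j)) '' D := by
    rcases (sub_nonneg.2 hjk).eq_or_lt with hkj | hkj
    · rw [← hkj, zpow_zero]
      exact ⟨d * e, mul_mem hd he, rfl⟩
    · exact h d hd e he _ hkj
  obtain ⟨f, hf, hfe⟩ := hmem
  have hk : σ ^ k = σ ^ j * σ ^ (k - j) := by rw [← zpow_add, add_sub_cancel]
  refine ⟨f, hf, ?_⟩
  rw [hk, StarAlgEquiv.mul_apply, StarAlgEquiv.mul_apply, hfe, ← map_mul]

theorem zpow_mul_zpow_mem_orbitSpan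
    (h : ∀ d ∈ D, ∀ e ∈ D, ∀ k : ℤ, 1 ≤ k → d * (σ ^ k) e ∈ ⇑(σ ^ k) '' D) (j k : ℤ) {d e : A}
    (hd : d ∈ D) (he : e ∈ D) : (σ ^ j) d * (σ ^ k) e ∈ orbitSpan σ D := by
  rcases le_total j k with hjk | hkj
  · obtain ⟨f, hf, hfe⟩ := exists_zpow_mul_zpow_eq h hjk hd he
    exact hfe ▸ zpow_mem_orbitSpan σ D k hf
  · obtain ⟨f, hf, hfe⟩ := exists_zpow_mul_zpow_eq h hkj (star_mem he) (star_mem hd)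
    have hstar : (σ ^ j) d * (σ ^ k) e = (σ ^ j) (star f) := by
      rw [map_star, ← hfe]
      simp only [star_mul, map_star, star_star]
    exact hstar ▸ zpow_mem_orbitSpan σ D j (star_mem hf)

theorem mul_mem_orbitSpan
    (h : ∀ d ∈ D, ∀ e ∈ D, ∀ k : ℤ, 1 ≤ k → d * (σ ^ k) e ∈ ⇑(σ ^ k) '' D) {x y : A}
    (hx : x ∈ orbitSpan σ D) (hy : y ∈ orbitSpan σ D) : x * y ∈ orbitSpan σ D := by
  refine Submodule.iSup_induction _ (motive := fun x => x * y ∈ orbitSpan σ D) hx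
    (fun j x hx => ?_) (by simp) fun x₁ x₂ h₁ h₂ => by simpa [add_mul] using add_mem h₁ h₂
  obtain ⟨d, hd, rfl⟩ := Submodule.mem_map.1 hx
  refine Submodule.iSup_induction _ (motive := fun y => (σ ^ j) d * y ∈ orbitSpan σ D) hy
    (fun k y hy => ?_) (by simp) fun y₁ y₂ h₁ h₂ => by simpa [mul_add] using add_mem h₁ h₂
  obtain ⟨e, he, rfl⟩ := Submodule.mem_map.1 hy
  exact zpow_mul_zpow_mem_orbitSpan h j k hd he

def orbitStarSubalgebra
    (h : ∀ d ∈ D, ∀ e ∈ D, ∀ k : ℤ, 1 ≤ k → d * (σ ^ k) e ∈ ⇑(σ ^ k) '' D) :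
    NonUnitalStarSubalgebra R A :=
  { orbitSpan σ D with
    mul_mem' := mul_mem_orbitSpan h
    star_mem' := star_mem_orbitSpan σ D }

end OrbitSpan

theorem stmt14_general {B : Type*} [NonUnitalNormedRing B] [StarRing B] [CStarRing B]
    [NormedSpace ℂ B] [IsScalarTower ℂ B B] [SMulCommClass ℂ B B] [StarModule ℂ B]
    [CompleteSpace B]
    (σ : B ≃⋆ₐ[ℂ] B) (D : NonUnitalStarSubalgebra ℂ B)
    (h1 : ∀ d ∈ D, ∀ e ∈ D, ∀ k : ℤ, 1 ≤ k →
        d * starAutZPow σ k e ∈ starAutZPow σ k '' (D : Set B)) :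
    ∃ C : NonUnitalStarSubalgebra ℂ B,
      (C : Set B) = closure {x : B | ∃ (s : Finset ℤ) (d : ℤ → B),
          (∀ j ∈ s, d j ∈ D) ∧ x = ∑ j ∈ s, starAutZPow σ j (d j)} ∧
      IsClosed (C : Set B) ∧ ⇑σ '' (C : Set B) = (C : Set B) ∧ (D : Set B) ⊆ (C : Set B) ∧
      ∀ C' : NonUnitalStarSubalgebra ℂ B, IsClosed (C' : Set B) →
        ⇑σ '' (C' : Set B) = (C' : Set B) → (D : Set B) ⊆ (C' : Set B) →
          (C : Set B) ⊆ (C' : Set B) := by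
  simp only [starAutZPow_eq_coe_zpow] at h1 ⊢
  let _ : NonUnitalCStarAlgebra B := {}
  let σₜ : B ≃ₜ B := ⟨σ.toEquiv, (StarAlgEquiv.isometry σ).continuous,
    (StarAlgEquiv.isometry σ.symm).continuous⟩
  refine ⟨(orbitStarSubalgebra h1).topologicalClosure, ?_, isClosed_closure, ?_, ?_, ?_⟩
  · exact congrArg closure (Set.ext fun x => mem_orbitSpan_iff σ D)
  · exact (σₜ.image_closure _).trans (congrArg closure (image_orbitSpan σ D))
  · exact fun d hd => subset_closure (show d ∈ orbitSpan σ D by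
      simpa using zpow_mem_orbitSpan σ D 0 hd)
  · exact fun C' hC' hσC' hDC' =>
      closure_minimal (orbitSpan_le σ D (P := C'.toSubmodule) hσC' hDC') hC'

/-- If `d·σᵏ(e) ∈ σᵏ(D)` for all `d, e ∈ D`, `k ≥ 1`, then the norm closure of the set of
finite sums `∑_{j ∈ S} σʲ(d_j)` (`S ⊆ ℤ` finite, `d_j ∈ D`) is the smallest σ-invariant closed
*-subalgebra of `B` containing `D`. -/
theorem stmt14 {B : Type*} [NonUnitalNormedRing B] [StarRing B] [CStarRing B]
    [NormedSpace ℂ B] [IsScalarTower ℂ B B] [SMulCommClass ℂ B B] [StarModule ℂ B]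
    [CompleteSpace B]
    (σ : B ≃⋆ₐ[ℂ] B) (D : NonUnitalStarSubalgebra ℂ B) (hD : IsClosed (D : Set B))
    (h1 : ∀ d ∈ D, ∀ e ∈ D, ∀ k : ℤ, 1 ≤ k →
        d * starAutZPow σ k e ∈ starAutZPow σ k '' (D : Set B)) :
    ∃ C : NonUnitalStarSubalgebra ℂ B,
      (C : Set B) = closure {x : B | ∃ (s : Finset ℤ) (d : ℤ → B),
          (∀ j ∈ s, d j ∈ D) ∧ x = ∑ j ∈ s, starAutZPow σ j (d j)} ∧
      IsClosed (C : Set B) ∧ ⇑σ '' (C : Set B) = (C : Set B) ∧ (D : Set B) ⊆ (C : Set B) ∧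
      ∀ C' : NonUnitalStarSubalgebra ℂ B, IsClosed (C' : Set B) →
        ⇑σ '' (C' : Set B) = (C' : Set B) → (D : Set B) ⊆ (C' : Set B) →
          (C : Set B) ⊆ (C' : Set B) :=
  stmt14_general σ D h1
end
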